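/- arXiv:2412.15367 — 2 statements merged into one kernel-verified Lean document; each statement's English description precedes it below -/
import Mathlib

section
/- Let w be a Gauss code on n ≥ 1 crossings whose underlying over/under word takes both values (there is at least one over position and at least one under position). Let S be the set of bridge starts of w, i.e., positions p with (w p).2 = true and (w (p-1)).2 = false. Then S is nonempty and there exists a valid over-first schedule for (w, S). Consequently, the over-first danceability number of w is at most the bridge number of w (the cardinality of S). -/
/-- A Gauss code on `n` crossings: each crossing `c` has exactly one over
position (value `(c, true)`) and exactly one under position (value `(c, false)`). -/
def IsGaussCode {n : ℕ} (w : ZMod (2*n) → Fin n × Bool) : Prop :=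
  ∀ (c : Fin n) (b : Bool), ∃! i, w i = (c, b)

/-- The cyclic distance from the start of the arc (w.r.t. the cut set `S`)
containing `p` back to `p`: the least `d` with `p - d ∈ S`. -/
noncomputable def arcDist {m : ℕ} (S : Set (ZMod m)) (p : ZMod m) : ℕ :=
  sInf {d : ℕ | p - (d : ZMod m) ∈ S}

/-- The start of the arc containing `p`, for the cut set `S`. -/
noncomputable def arcStart {m : ℕ} (S : Set (ZMod m)) (p : ZMod m) : ZMod m :=
  p - (arcDist S p : ZMod m)

/-- A valid over-first schedule for `(w, S)`: a bijection `τ` assigning times,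
increasing along each arc in arc order, giving every crossing's over position
a smaller time than its under position. -/
def ValidOverFirst {n : ℕ} (w : ZMod (2*n) → Fin n × Bool)
    (S : Set (ZMod (2*n))) (τ : ZMod (2*n) ≃ Fin (2*n)) : Prop :=
  (∀ p q, arcStart S p = arcStart S q → arcDist S p < arcDist S q →
      (τ p : ℕ) < (τ q : ℕ)) ∧
  ∀ (c : Fin n) (p q), w p = (c, true) → w q = (c, false) → (τ p : ℕ) < (τ q : ℕ)

/-- A valid under-first schedule: increasing along arcs, every crossing's over
position gets a *later* time than its under position. -/
def ValidUnderFirst {n : ℕ} (w : ZMod (2*n) → Fin n × Bool)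
    (S : Set (ZMod (2*n))) (τ : ZMod (2*n) ≃ Fin (2*n)) : Prop :=
  (∀ p q, arcStart S p = arcStart S q → arcDist S p < arcDist S q →
      (τ p : ℕ) < (τ q : ℕ)) ∧
  ∀ (c : Fin n) (p q), w p = (c, true) → w q = (c, false) → (τ q : ℕ) < (τ p : ℕ)

/-- The over-first danceability number of `w`: least cardinality of a nonempty
cut set admitting a valid over-first schedule. -/
noncomputable def overDanceNum {n : ℕ} (w : ZMod (2*n) → Fin n × Bool) : ℕ :=
  sInf {k | ∃ S : Set (ZMod (2*n)), S.Nonempty ∧ Nat.card S = k ∧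
    ∃ τ, ValidOverFirst w S τ}

/-- The under-first danceability number of `w`. -/
noncomputable def underDanceNum {n : ℕ} (w : ZMod (2*n) → Fin n × Bool) : ℕ :=
  sInf {k | ∃ S : Set (ZMod (2*n)), S.Nonempty ∧ Nat.card S = k ∧
    ∃ τ, ValidUnderFirst w S τ}

/-- The set of bridge starts of `w`. -/
def BridgeStarts {n : ℕ} (w : ZMod (2*n) → Fin n × Bool) : Set (ZMod (2*n)) :=
  {p | (w p).2 = true ∧ (w (p - 1)).2 = false}

/-- The reversal of a Gauss code. -/
def revCode {n : ℕ} (w : ZMod (2*n) → Fin n × Bool) :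
    ZMod (2*n) → Fin n × Bool :=
  fun i => w (-(i + 1))

/-!
Cut the code at its bridge starts. Inside an arc no under position can precede an over
position: the first over position after an under one would itself be a bridge start, so
it would begin a new arc. Hence the schedule that runs through all over positions first and
then all under positions, each group ordered by arc and by position along the arc, is
increasing on every arc, and it puts each over position before each under one.
-/

lemma Nat.exists_false_true_of_le {f : ℕ → Bool} {a b : ℕ} (hab : a ≤ b)
    (ha : f a = false) (hb : f b = true) : ∃ j, a ≤ j ∧ j < b ∧ f j = false ∧ f (j + 1) = true := by
  induction b, hab using Nat.le_induction with
  | base => simp [ha] at hb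
  | succ b hab ih =>
    cases hfb : f b with
    | false => exact ⟨b, hab, b.lt_succ_self, hfb, hb⟩
    | true =>
      obtain ⟨j, haj, hjb, hj⟩ := ih hfb
      exact ⟨j, haj, hjb.trans b.lt_succ_self, hj⟩

lemma exists_equiv_fin_lt_of_injective {α β : Type*} [Fintype α] [LinearOrder β] {k : ℕ}
    (hk : Fintype.card α = k) {f : α → β} (hf : Function.Injective f) :
    ∃ τ : α ≃ Fin k, ∀ p q, f p < f q → τ p < τ q := by
  let : LinearOrder α := LinearOrder.lift' f hf
  exact ⟨(monoEquivOfFin α hk).symm.toEquiv, fun _ _ h => (monoEquivOfFin α hk).symm.lt_iff_lt.2 h⟩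

section Arcs

variable {m : ℕ} (S : Set (ZMod m))

lemma arcStart_add_arcDist (p : ZMod m) : arcStart S p + arcDist S p = p :=
  sub_add_cancel p _

lemma arcDist_le {p : ZMod m} {d : ℕ} (h : p - d ∈ S) : arcDist S p ≤ d :=
  Nat.sInf_le h

lemma arcStart_arcDist_injective : Function.Injective fun p => (arcStart S p, arcDist S p) := by
  intro p q h
  rw [← arcStart_add_arcDist S p, ← arcStart_add_arcDist S q]
  simp_all

end Arcs

section Bridges

variable {n : ℕ} (w : ZMod (2*n) → Fin n × Bool)

lemma exists_mem_bridgeStarts_between (s : ZMod (2*n)) {a b : ℕ} (hab : a ≤ b)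
    (ha : (w (s + a)).2 = false) (hb : (w (s + b)).2 = true) :
    ∃ j, a < j ∧ j ≤ b ∧ s + j ∈ BridgeStarts w := by
  obtain ⟨j, haj, hjb, hj, hj1⟩ :=
    Nat.exists_false_true_of_le (f := fun j : ℕ => (w (s + j)).2) hab ha hb
  refine ⟨j + 1, by omega, hjb, by simpa using hj1, ?_⟩
  simpa [← add_assoc] using hj

lemma bridgeStarts_nonempty [NeZero (2*n)] (hover : ∃ p, (w p).2 = true)
    (hunder : ∃ p, (w p).2 = false) : (BridgeStarts w).Nonempty := by
  obtain ⟨p, hp⟩ := hover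
  obtain ⟨q, hq⟩ := hunder
  obtain ⟨j, -, -, hj⟩ := exists_mem_bridgeStarts_between w q (Nat.zero_le (p - q).val)
    (by simpa using hq) (by simpa using hp)
  exact ⟨_, hj⟩

lemma under_of_arcDist_lt_of_under {p q : ZMod (2*n)}
    (hs : arcStart (BridgeStarts w) p = arcStart (BridgeStarts w) q)
    (hd : arcDist (BridgeStarts w) p < arcDist (BridgeStarts w) q)
    (hp : (w p).2 = false) : (w q).2 = false := by
  set S := BridgeStarts w
  have hp_eq := arcStart_add_arcDist S p
  have hq_eq := arcStart_add_arcDist S q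
  rw [hs] at hp_eq
  by_contra hq
  obtain ⟨j, hpj, hjq, hj⟩ := exists_mem_bridgeStarts_between w (arcStart S q) hd.le
    (by rwa [hp_eq]) (by simpa [hq_eq] using hq)
  have : q - ((arcDist S q - j : ℕ) : ZMod (2*n)) = arcStart S q + j := by
    rw [Nat.cast_sub hjq]; linear_combination -hq_eq
  have := arcDist_le S (this ▸ hj)
  omega

lemma exists_validOverFirst_bridgeStarts [NeZero (2*n)] :
    ∃ τ, ValidOverFirst w (BridgeStarts w) τ := by
  set S := BridgeStarts w
  let key : ZMod (2*n) → Bool ×ₗ (ℕ ×ₗ ℕ) :=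
    fun p => toLex (!(w p).2, toLex ((arcStart S p).val, arcDist S p))
  have hkey : Function.Injective key := by
    intro p q h
    simp only [key, toLex_inj, Prod.mk.injEq, (ZMod.val_injective _).eq_iff] at h
    exact arcStart_arcDist_injective S (Prod.ext h.2.1 h.2.2)
  obtain ⟨τ, hτ⟩ := exists_equiv_fin_lt_of_injective (ZMod.card _) hkey
  refine ⟨τ, fun p q hs hd => hτ p q ?_, fun c p q hp hq => hτ p q ?_⟩
  · refine Prod.Lex.toLex_strictMono (Prod.mk_lt_mk_of_le_of_lt ?_ ?_)
    · simpa [Bool.le_iff_imp] using under_of_arcDist_lt_of_under w hs hd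
    · simp [Prod.Lex.toLex_lt_toLex, hs, hd]
  · simp [key, Prod.Lex.toLex_lt_toLex, hp, hq]

end Bridges

theorem overDance_le_bridgeNumber_general
    (n : ℕ) (w : ZMod (2*n) → Fin n × Bool)
    (hover : ∃ p, (w p).2 = true) (hunder : ∃ p, (w p).2 = false) :
    (BridgeStarts w).Nonempty ∧
    (∃ τ : ZMod (2*n) ≃ Fin (2*n), ValidOverFirst w (BridgeStarts w) τ) ∧
    overDanceNum w ≤ Nat.card (BridgeStarts w) := by
  have : NeZero n := ⟨(w hover.choose).1.pos.ne'⟩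
  have hS := bridgeStarts_nonempty w hover hunder
  obtain ⟨τ, hτ⟩ := exists_validOverFirst_bridgeStarts w
  exact ⟨hS, ⟨τ, hτ⟩, Nat.sInf_le ⟨_, hS, rfl, τ, hτ⟩⟩

/-- Cutting at the bridge starts yields a valid over-first schedule; hence the
over-first danceability number is at most the bridge number. -/
theorem overDance_le_bridgeNumber
    (n : ℕ) (hn : 1 ≤ n) (w : ZMod (2*n) → Fin n × Bool) (hw : IsGaussCode w)
    (hover : ∃ p, (w p).2 = true) (hunder : ∃ p, (w p).2 = false) :
    (BridgeStarts w).Nonempty ∧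
    (∃ τ : ZMod (2*n) ≃ Fin (2*n), ValidOverFirst w (BridgeStarts w) τ) ∧
    overDanceNum w ≤ Nat.card (BridgeStarts w) :=
  overDance_le_bridgeNumber_general n w hover hunder
end

section
/- Let w be a Gauss code on n ≥ 1 crossings with at least one over position and at least one under position, and suppose (w, S) admits a valid over-first schedule for some nonempty cut set S with |S| = k. Then there exists a cut set S' with |S'| ≤ k such that every element of S' is a bridge start of w (a position p with (w p).2 = true and (w (p-1)).2 = false) and (w, S') admits a valid over-first schedule. -/
section arcs
variable {m : ℕ} [NeZero m] {S : Set (ZMod m)} {p : ZMod m}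

lemma arc_set_nonempty (hS : S.Nonempty) (p : ZMod m) :
    {d : ℕ | p - (d : ZMod m) ∈ S}.Nonempty := by
  obtain ⟨s, hs⟩ := hS
  refine ⟨(p - s).val, ?_⟩
  have : ((p - s).val : ZMod m) = p - s := by simp [ZMod.natCast_val]
  simp [Set.mem_setOf_eq, this, hs]

lemma arcStart_mem (hS : S.Nonempty) (p : ZMod m) : arcStart S p ∈ S :=
  Nat.sInf_mem (arc_set_nonempty hS p)

omit [NeZero m] in
lemma notMem_of_lt_arcDist {j : ℕ} (h : j < arcDist S p) : p - (j : ZMod m) ∉ S :=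
  fun hj => (Nat.sInf_le hj).not_gt h

lemma arcDist_lt (hS : S.Nonempty) (p : ZMod m) : arcDist S p < m := by
  obtain ⟨s, hs⟩ := hS
  have h1 : (p - s).val ∈ {d : ℕ | p - (d : ZMod m) ∈ S} := by
    have : ((p - s).val : ZMod m) = p - s := by simp [ZMod.natCast_val]
    simp [Set.mem_setOf_eq, this, hs]
  exact lt_of_le_of_lt (Nat.sInf_le h1) (ZMod.val_lt _)

omit [NeZero m] in
lemma arc_eq_self (p : ZMod m) : p = arcStart S p + (arcDist S p : ZMod m) := by
  simp [arcStart]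

lemma arcDist_eq_of {s : ZMod m} {d : ℕ} (hs : s ∈ S)
    (h : ∀ j : ℕ, 0 < j → j ≤ d → s + (j : ZMod m) ∉ S) :
    arcDist S (s + d) = d ∧ arcStart S (s + d) = s := by
  have hmem : d ∈ {e : ℕ | s + (d : ZMod m) - (e : ZMod m) ∈ S} := by
    simp [Set.mem_setOf_eq, hs]
  have hle : arcDist S (s + d) ≤ d := Nat.sInf_le hmem
  have hnlt : ¬ arcDist S (s + d) < d := by
    intro hlt
    have hmem2 := arcStart_mem ⟨s, hs⟩ (s + (d : ZMod m))
    have heq : arcStart S (s + (d:ZMod m)) = s + ((d - arcDist S (s + d) : ℕ) : ZMod m) := by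
      rw [arcStart]
      push_cast [Nat.cast_sub hlt.le]
      ring
    rw [heq] at hmem2
    exact h _ (by omega) (by omega) hmem2
  have hdd : arcDist S (s + d) = d := by omega
  refine ⟨hdd, ?_⟩
  rw [arcStart, hdd]; ring

lemma arc_inner_notMem (hS : S.Nonempty) {j : ℕ} (hj : 0 < j) (hjd : j ≤ arcDist S p) :
    arcStart S p + (j : ZMod m) ∉ S := by
  have : arcStart S p + (j : ZMod m) = p - ((arcDist S p - j : ℕ) : ZMod m) := by
    rw [arcStart]
    push_cast [Nat.cast_sub hjd]
    ring
  rw [this]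
  exact notMem_of_lt_arcDist (by omega)

lemma natCast_zmod_eq_zero {j : ℕ} (hj : j < m) (h : (j : ZMod m) = 0) : j = 0 := by
  have hdvd := (ZMod.natCast_eq_zero_iff j m).mp h
  exact Nat.eq_zero_of_dvd_of_lt hdvd hj

/-- Arc transfer for a forward slide of the cut at `p` to `p+1`. -/
lemma arc_transfer_A (hp : p ∈ S) {q : ZMod m} (hq : q ≠ p) :
    (arcStart (insert (p+1) (S \ {p})) q = arcStart S q ∧
      arcDist (insert (p+1) (S \ {p})) q = arcDist S q ∧ arcStart S q ≠ p) ∨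
    (arcStart S q = p ∧ arcStart (insert (p+1) (S \ {p})) q = p + 1 ∧
      arcDist (insert (p+1) (S \ {p})) q + 1 = arcDist S q) := by
  have hS : S.Nonempty := ⟨p, hp⟩
  set S' := insert (p+1) (S \ {p}) with hS'
  set d := arcDist S q with hd
  set s := arcStart S q with hs
  have hsS : s ∈ S := arcStart_mem hS q
  have hqs : q = s + (d : ZMod m) := arc_eq_self q
  have hinner : ∀ j : ℕ, 0 < j → j ≤ d → s + (j : ZMod m) ∉ S :=
    fun j hj hjd => arc_inner_notMem hS hj hjd
  have hdm : d < m := arcDist_lt hS q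
  by_cases hsp : s = p
  · -- case 2: the arc started at p; new arc starts at p+1
    have hd1 : 1 ≤ d := by
      rcases Nat.eq_zero_or_pos d with h0 | h1
      · exfalso; apply hq; rw [hqs, h0, hsp]; simp
      · exact h1
    have key := arcDist_eq_of (S := S') (s := p + 1) (d := d - 1)
      (Set.mem_insert _ _) ?_
    · have hq' : q = (p + 1) + ((d - 1 : ℕ) : ZMod m) := by
        rw [hqs, hsp]
        push_cast [Nat.cast_sub hd1]
        ring
      rw [← hq'] at key
      exact Or.inr ⟨hsp, key.2, by omega⟩
    · intro j hj hjd hmem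
      rcases Set.mem_insert_iff.mp hmem with h1 | h1
      · have h2 : (j : ZMod m) = 0 := by
          have h3 := h1
          rw [add_right_comm] at h3
          have h4 := add_right_cancel h3
          exact (add_eq_left).mp h4
        have := natCast_zmod_eq_zero (by omega) h2
        omega
      · apply hinner (j + 1) (by omega) (by omega)
        rw [hsp]
        push_cast
        rw [show p + ((j : ZMod m) + 1) = p + 1 + (j : ZMod m) by ring]
        exact h1.1
  · -- case 1: arc unchanged
    have key := arcDist_eq_of (S := S') (s := s) (d := d)
      (Set.mem_insert_of_mem _ ⟨hsS, hsp⟩) ?_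
    · rw [← hqs] at key
      exact Or.inl ⟨key.2, key.1, hsp⟩
    · intro j hj hjd hmem
      rcases Set.mem_insert_iff.mp hmem with h1 | h1
      · rcases Nat.eq_or_lt_of_le hj with h2 | h2
        · apply hsp
          have hj1 : j = 1 := h2.symm
          subst hj1
          push_cast at h1
          exact add_right_cancel h1
        · apply hinner (j - 1) (by omega) (by omega)
          have : s + ((j - 1 : ℕ) : ZMod m) = p := by
            have h3 : s + (j : ZMod m) - 1 = p := by rw [h1]; ring
            rw [← h3]
            push_cast [Nat.cast_sub (by omega : 1 ≤ j)]
            ring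
          rw [this]; exact hp
      · exact hinner j hj hjd h1.1

/-- Arc transfer for a backward slide of the cut at `p` to `p-1`. -/
lemma arc_transfer_B (hm : 1 < m) (hp : p ∈ S) {q : ZMod m} (hq : q ≠ p - 1) :
    (arcStart (insert (p-1) (S \ {p})) q = arcStart S q ∧
      arcDist (insert (p-1) (S \ {p})) q = arcDist S q ∧ arcStart S q ≠ p) ∨
    (arcStart S q = p ∧ arcStart (insert (p-1) (S \ {p})) q = p - 1 ∧
      arcDist (insert (p-1) (S \ {p})) q = arcDist S q + 1) := by
  have hS : S.Nonempty := ⟨p, hp⟩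
  set S' := insert (p-1) (S \ {p}) with hS'
  set d := arcDist S q with hd
  set s := arcStart S q with hs
  have hsS : s ∈ S := arcStart_mem hS q
  have hqs : q = s + (d : ZMod m) := arc_eq_self q
  have hinner : ∀ j : ℕ, 0 < j → j ≤ d → s + (j : ZMod m) ∉ S :=
    fun j hj hjd => arc_inner_notMem hS hj hjd
  have hdm : d < m := arcDist_lt hS q
  have hp1 : p ≠ p - 1 := by
    intro h
    have h1 : ((1:ℕ) : ZMod m) = 0 := by
      push_cast
      rw [show (1:ZMod m) = p - (p-1) by ring]
      rw [← h]; ring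
    have := natCast_zmod_eq_zero (by omega : (1:ℕ) < m) h1
    omega
  by_cases hsp : s = p
  · -- case 2: arc started at p; new arc starts at p-1, one longer
    have hd2 : d + 1 < m := by
      rcases Nat.lt_or_ge (d+1) m with h1 | h1
      · exact h1
      · exfalso
        have hdm1 : d = m - 1 := by omega
        apply hq
        rw [hqs, hsp, hdm1]
        have : ((m - 1 : ℕ) : ZMod m) = -1 := by
          have h2 : ((m : ℕ) : ZMod m) = 0 := ZMod.natCast_self m
          have h3 : ((m - 1 : ℕ) : ZMod m) + 1 = ((m : ℕ) : ZMod m) := by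
            push_cast [Nat.cast_sub (by omega : 1 ≤ m)]
            ring
          rw [h2] at h3
          exact eq_neg_of_add_eq_zero_left h3
        rw [this]; ring
    have key := arcDist_eq_of (S := S') (s := p - 1) (d := d + 1)
      (Set.mem_insert _ _) ?_
    · have hq' : q = (p - 1) + ((d + 1 : ℕ) : ZMod m) := by
        rw [hqs, hsp]; push_cast; ring
      rw [← hq'] at key
      exact Or.inr ⟨hsp, key.2, key.1⟩
    · intro j hj hjd hmem
      rcases Set.mem_insert_iff.mp hmem with h1 | h1
      · have h2 : (j : ZMod m) = 0 := add_eq_left.mp h1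
        have := natCast_zmod_eq_zero (by omega) h2
        omega
      · rcases Nat.eq_or_lt_of_le hj with h2 | h2
        · -- j = 1 : p - 1 + 1 = p ∈ S \ {p}, contradiction
          apply h1.2
          have hj1 : j = 1 := h2.symm
          subst hj1
          have h3 : p - 1 + ((1:ℕ) : ZMod m) = p := by push_cast; ring
          rw [h3]
          exact Set.mem_singleton _
        · apply hinner (j - 1) (by omega) (by omega)
          rw [hsp]
          have : p + ((j - 1 : ℕ) : ZMod m) = p - 1 + (j : ZMod m) := by
            push_cast [Nat.cast_sub (by omega : 1 ≤ j)]
            ring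
          rw [this]
          exact h1.1
  · -- case 1: arc unchanged
    have key := arcDist_eq_of (S := S') (s := s) (d := d)
      (Set.mem_insert_of_mem _ ⟨hsS, hsp⟩) ?_
    · rw [← hqs] at key
      exact Or.inl ⟨key.2, key.1, hsp⟩
    · intro j hj hjd hmem
      rcases Set.mem_insert_iff.mp hmem with h1 | h1
      · -- s + j = p - 1
        rcases Nat.eq_or_lt_of_le hjd with h2 | h2
        · -- j = d : q = p - 1, contradiction
          apply hq
          rw [hqs, ← h2, h1]
        · -- j < d : s + (j+1) = p ∈ S contradicts innerness
          apply hinner (j + 1) (by omega) (by omega)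
          have : s + ((j + 1 : ℕ) : ZMod m) = p := by
            push_cast
            rw [show s + ((j:ZMod m) + 1) = (s + (j:ZMod m)) + 1 by ring, h1]
            ring
          rw [this]; exact hp
      · exact hinner j hj hjd h1.1


def toTop {m : ℕ} (i : Fin m) : Equiv.Perm (Fin m) :=
  (Fin.revPerm.trans (Fin.cycleRange i.rev)).trans Fin.revPerm

lemma toTop_val {m : ℕ} (i j : Fin m) :
    ((toTop i j : Fin m) : ℕ) = if j = i then m - 1 else if (j:ℕ) < (i:ℕ) then j else (j:ℕ) - 1 := by
  cases m with
  | zero => exact j.elim0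
  | succ m =>
  have hj := j.isLt
  have hi := i.isLt
  rcases lt_trichotomy (j:ℕ) (i:ℕ) with h | h | h
  · have hne : j ≠ i := by intro he; rw [he] at h; omega
    have hgt : i.rev < j.rev := by
      rw [Fin.rev_lt_rev]; exact Fin.lt_def.mpr h
    simp only [toTop, Equiv.trans_apply, Fin.revPerm_apply]
    rw [Fin.cycleRange_of_gt hgt, Fin.rev_rev]
    simp [hne, h]
  · have he : j = i := Fin.ext h
    simp only [toTop, Equiv.trans_apply, Fin.revPerm_apply, he]
    rw [Fin.cycleRange_self, Fin.val_rev]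
    simp
  · have hne : j ≠ i := by intro he; rw [he] at h; omega
    have hlt : j.rev < i.rev := by rw [Fin.rev_lt_rev]; exact Fin.lt_def.mpr h
    simp only [toTop, Equiv.trans_apply, Fin.revPerm_apply]
    rw [Fin.cycleRange_of_lt hlt]
    have hadd : ((j.rev + 1 : Fin (m+1)) : ℕ) = (j.rev : ℕ) + 1 := by
      apply Fin.val_add_one_of_lt
      exact lt_of_lt_of_le hlt (Fin.le_last _)
    rw [Fin.val_rev, hadd, Fin.val_rev]
    rw [if_neg hne, if_neg (by omega : ¬ (j:ℕ) < (i:ℕ))]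
    omega

lemma cycleRange_val {m : ℕ} (i j : Fin m) :
    ((Fin.cycleRange i j : Fin m) : ℕ) = if j = i then 0 else if (j:ℕ) < (i:ℕ) then (j:ℕ) + 1 else j := by
  cases m with
  | zero => exact j.elim0
  | succ m =>
  rcases lt_trichotomy (j:ℕ) (i:ℕ) with h | h | h
  · have hne : j ≠ i := by intro he; rw [he] at h; omega
    rw [Fin.cycleRange_of_lt (Fin.lt_def.mpr h)]
    have : ((j + 1 : Fin (m+1)) : ℕ) = (j : ℕ) + 1 :=
      Fin.val_add_one_of_lt (lt_of_lt_of_le (Fin.lt_def.mpr h) (Fin.le_last _))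
    simp [hne, h, this]
  · have he : j = i := Fin.ext h
    simp [he, Fin.cycleRange_self]
  · have hne : j ≠ i := by intro he; rw [he] at h; omega
    rw [Fin.cycleRange_of_gt (Fin.lt_def.mpr h)]
    rw [if_neg hne, if_neg (by omega : ¬ (j:ℕ) < (i:ℕ))]


section steplemmas
variable {m : ℕ} [NeZero m] {S : Set (ZMod m)} {p : ZMod m}

lemma lastA (hp : p ∈ S) (r : ZMod m)
    (hst : arcStart (insert (p+1) (S \ {p})) r = arcStart (insert (p+1) (S \ {p})) p) :
    ¬ arcDist (insert (p+1) (S \ {p})) p < arcDist (insert (p+1) (S \ {p})) r := by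
  set S' := insert (p+1) (S \ {p}) with hS'
  have hS'ne : S'.Nonempty := ⟨p+1, Set.mem_insert _ _⟩
  intro hlt
  have h1 := arc_inner_notMem (S := S') hS'ne (p := r)
    (j := arcDist S' p + 1) (by omega) (by omega)
  apply h1
  rw [hst]
  have h2 : arcStart S' p + ((arcDist S' p + 1 : ℕ) : ZMod m) = p + 1 := by
    push_cast
    rw [show arcStart S' p + ((arcDist S' p : ZMod m) + 1)
        = (arcStart S' p + (arcDist S' p : ZMod m)) + 1 by ring,
      ← arc_eq_self (S := S') p]
  rw [h2]
  exact Set.mem_insert _ _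

end steplemmas

section steps
variable {n : ℕ} [NeZero (2*n)] {w : ZMod (2*n) → Fin n × Bool}
  {S : Set (ZMod (2*n))} {p : ZMod (2*n)} {τ : ZMod (2*n) ≃ Fin (2*n)}

lemma stepA (hp : p ∈ S) (hpw : (w p).2 = false) (h : ValidOverFirst w S τ) :
    ValidOverFirst w (insert (p+1) (S \ {p})) (τ.trans (toTop (τ p))) := by
  set S' := insert (p+1) (S \ {p}) with hS'
  set τ' := τ.trans (toTop (τ p)) with hτ'
  have hval : ∀ q, (τ' q : ℕ) =
      if τ q = τ p then 2*n - 1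
      else if ((τ q : Fin (2*n)) : ℕ) < ((τ p : Fin (2*n)) : ℕ) then ((τ q : Fin (2*n)) : ℕ)
      else ((τ q : Fin (2*n)) : ℕ) - 1 :=
    fun q => toTop_val (τ p) (τ q)
  have hne : ∀ q, q ≠ p → ((τ q : Fin (2*n)) : ℕ) ≠ ((τ p : Fin (2*n)) : ℕ) :=
    fun q hq hv => hq (τ.injective (Fin.ext hv))
  have hfne : ∀ q, q ≠ p → τ q ≠ τ p := fun q hq hv => hq (τ.injective hv)
  have F1 : ∀ q, q ≠ p → (τ' q : ℕ) < (τ' p : ℕ) := by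
    intro q hq
    have h1 := hval q; have h2 := hval p
    rw [if_pos rfl] at h2
    rw [if_neg (hfne q hq)] at h1
    have e1 := (τ q).isLt; have e2 := (τ p).isLt; have e3 := hne q hq
    split_ifs at h1 <;> omega
  have F2 : ∀ q r, q ≠ p → r ≠ p → (((τ' q : Fin (2*n)) : ℕ) < ((τ' r : Fin (2*n)) : ℕ)
      ↔ ((τ q : Fin (2*n)) : ℕ) < ((τ r : Fin (2*n)) : ℕ)) := by
    intro q r hq hr
    have h1 := hval q; have h2 := hval r
    rw [if_neg (hfne q hq)] at h1
    rw [if_neg (hfne r hr)] at h2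
    have e1 := (τ q).isLt; have e2 := (τ r).isLt; have e3 := (τ p).isLt
    have e4 := hne q hq; have e5 := hne r hr
    split_ifs at h1 h2 <;> omega
  constructor
  · intro q r hst hlt
    by_cases hrp : r = p
    · have hqp : q ≠ p := by
        rintro rfl
        rw [hrp] at hlt
        exact absurd hlt (lt_irrefl _)
      rw [hrp]
      exact F1 q hqp
    · by_cases hqp : q = p
      · exfalso
        rw [hqp] at hst hlt
        exact lastA hp r hst.symm hlt
      · rcases arc_transfer_A hp hqp with ⟨hq1, hq2, hq3⟩ | ⟨hq1, hq2, hq3⟩ <;>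
          rcases arc_transfer_A hp hrp with ⟨hr1, hr2, hr3⟩ | ⟨hr1, hr2, hr3⟩ <;>
          simp only [← hS'] at hq1 hq2 hq3 hr1 hr2 hr3
        · exact (F2 q r hqp hrp).mpr
            (h.1 q r (by rw [← hq1, ← hr1, hst]) (by omega))
        · exfalso
          have hmem : arcStart S q ∈ S := arcStart_mem ⟨p, hp⟩ q
          have h5 : arcStart S q = p + 1 := by rw [← hq1, hst, hr2]
          have h6 := arc_inner_notMem (S := S) ⟨p, hp⟩ (p := r) (j := 1) one_pos (by omega)
          rw [hr1, Nat.cast_one] at h6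
          exact h6 (h5 ▸ hmem)
        · exfalso
          have hmem : arcStart S r ∈ S := arcStart_mem ⟨p, hp⟩ r
          have h5 : arcStart S r = p + 1 := by rw [← hr1, ← hst, hq2]
          have h6 := arc_inner_notMem (S := S) ⟨p, hp⟩ (p := q) (j := 1) one_pos (by omega)
          rw [hq1, Nat.cast_one] at h6
          exact h6 (h5 ▸ hmem)
        · exact (F2 q r hqp hrp).mpr
            (h.1 q r (by rw [hq1, hr1]) (by omega))
  · intro c u v hu hv
    by_cases hup : u = p
    · exfalso; rw [hup] at hu; rw [hu] at hpw; simp at hpw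
    · by_cases hvp : v = p
      · rw [hvp]; exact F1 u hup
      · exact (F2 u v hup hvp).mpr (h.2 c u v hu hv)

lemma stepB (hm : 1 < 2*n) (hp : p ∈ S) (hpw : (w (p-1)).2 = true)
    (h : ValidOverFirst w S τ) :
    ValidOverFirst w (insert (p-1) (S \ {p})) (τ.trans (Fin.cycleRange (τ (p-1)))) := by
  set S' := insert (p-1) (S \ {p}) with hS'
  set τ' := τ.trans (Fin.cycleRange (τ (p-1))) with hτ'
  have hval : ∀ q, (τ' q : ℕ) =
      if τ q = τ (p-1) then 0
      else if ((τ q : Fin (2*n)) : ℕ) < ((τ (p-1) : Fin (2*n)) : ℕ)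
        then ((τ q : Fin (2*n)) : ℕ) + 1
      else ((τ q : Fin (2*n)) : ℕ) :=
    fun q => cycleRange_val (τ (p-1)) (τ q)
  have hne : ∀ q, q ≠ p - 1 → ((τ q : Fin (2*n)) : ℕ) ≠ ((τ (p-1) : Fin (2*n)) : ℕ) :=
    fun q hq hv => hq (τ.injective (Fin.ext hv))
  have hfne : ∀ q, q ≠ p - 1 → τ q ≠ τ (p-1) := fun q hq hv => hq (τ.injective hv)
  have G1 : ∀ q, q ≠ p - 1 → (τ' (p-1) : ℕ) < (τ' q : ℕ) := by
    intro q hq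
    have h1 := hval q; have h2 := hval (p-1)
    rw [if_pos rfl] at h2
    rw [if_neg (hfne q hq)] at h1
    have e3 := hne q hq
    have e1 := (τ q).isLt; have e2 := (τ (p-1)).isLt
    split_ifs at h1 <;> omega
  have G2 : ∀ q r, q ≠ p - 1 → r ≠ p - 1 → (((τ' q : Fin (2*n)) : ℕ) < ((τ' r : Fin (2*n)) : ℕ)
      ↔ ((τ q : Fin (2*n)) : ℕ) < ((τ r : Fin (2*n)) : ℕ)) := by
    intro q r hq hr
    have h1 := hval q; have h2 := hval r
    rw [if_neg (hfne q hq)] at h1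
    rw [if_neg (hfne r hr)] at h2
    have e4 := hne q hq; have e5 := hne r hr
    have e1 := (τ q).isLt; have e2 := (τ r).isLt; have e3 := (τ (p-1)).isLt
    split_ifs at h1 h2 <;> omega
  have hdist0 : arcDist S' (p-1) = 0 := by
    apply Nat.sInf_eq_zero.mpr
    left
    show p - 1 - ((0:ℕ) : ZMod (2*n)) ∈ S'
    simp only [Nat.cast_zero, sub_zero]
    exact Set.mem_insert _ _
  constructor
  · intro q r hst hlt
    by_cases hrp : r = p - 1
    · subst hrp
      rw [hdist0] at hlt
      omega
    · by_cases hqp : q = p - 1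
      · subst hqp; exact G1 r hrp
      · rcases arc_transfer_B hm hp hqp with ⟨hq1, hq2, hq3⟩ | ⟨hq1, hq2, hq3⟩ <;>
          rcases arc_transfer_B hm hp hrp with ⟨hr1, hr2, hr3⟩ | ⟨hr1, hr2, hr3⟩ <;>
          simp only [← hS'] at hq1 hq2 hq3 hr1 hr2 hr3
        · exact (G2 q r hqp hrp).mpr
            (h.1 q r (by rw [← hq1, ← hr1, hst]) (by omega))
        · exfalso
          have h5 : arcStart S q = p - 1 := by rw [← hq1, hst, hr2]
          rcases Nat.eq_zero_or_pos (arcDist S q) with h0 | h0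
          · apply hqp
            have h7 := arc_eq_self (S := S) q
            rw [h0] at h7
            simp only [Nat.cast_zero, add_zero] at h7
            rw [h7, h5]
          · have h6 := arc_inner_notMem (S := S) ⟨p, hp⟩ (p := q) (j := 1) one_pos h0
            apply h6
            rw [h5, Nat.cast_one, show p - 1 + (1 : ZMod (2*n)) = p by ring]
            exact hp
        · exfalso
          have h5 : arcStart S r = p - 1 := by rw [← hr1, ← hst, hq2]
          rcases Nat.eq_zero_or_pos (arcDist S r) with h0 | h0
          · apply hrp
            have h7 := arc_eq_self (S := S) r
            rw [h0] at h7
            simp only [Nat.cast_zero, add_zero] at h7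
            rw [h7, h5]
          · have h6 := arc_inner_notMem (S := S) ⟨p, hp⟩ (p := r) (j := 1) one_pos h0
            apply h6
            rw [h5, Nat.cast_one, show p - 1 + (1 : ZMod (2*n)) = p by ring]
            exact hp
        · exact (G2 q r hqp hrp).mpr
            (h.1 q r (by rw [hq1, hr1]) (by omega))
  · intro c u v hu hv
    by_cases hvp : v = p - 1
    · exfalso; rw [hvp] at hv; rw [hv] at hpw; simp at hpw
    · by_cases hup : u = p - 1
      · rw [hup]; exact G1 v hvp
      · exact (G2 u v hup hvp).mpr (h.2 c u v hu hv)

end steps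


section measure
variable {n : ℕ} [NeZero (2*n)] {w : ZMod (2*n) → Fin n × Bool}

noncomputable def phi (w : ZMod (2*n) → Fin n × Bool) (p : ZMod (2*n)) : ℕ :=
  if (w p).2 = false then sInf {d : ℕ | (w (p + (d : ZMod (2*n)))).2 = true}
  else sInf {d : ℕ | (w (p - (d : ZMod (2*n)))).2 = false} - 1

lemma over_set_nonempty (hover : ∃ q, (w q).2 = true) (p : ZMod (2*n)) :
    {d : ℕ | (w (p + (d : ZMod (2*n)))).2 = true}.Nonempty := by
  obtain ⟨q, hq⟩ := hover
  refine ⟨(q - p).val, ?_⟩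
  have : ((q - p).val : ZMod (2*n)) = q - p := by simp [ZMod.natCast_val]
  simp only [Set.mem_setOf_eq, this]
  rw [show p + (q - p) = q by ring]
  exact hq

lemma under_set_nonempty (hunder : ∃ q, (w q).2 = false) (p : ZMod (2*n)) :
    {d : ℕ | (w (p - (d : ZMod (2*n)))).2 = false}.Nonempty := by
  obtain ⟨q, hq⟩ := hunder
  refine ⟨(p - q).val, ?_⟩
  have : ((p - q).val : ZMod (2*n)) = p - q := by simp [ZMod.natCast_val]
  simp only [Set.mem_setOf_eq, this]
  rw [show p - (p - q) = q by ring]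
  exact hq

lemma nat_sInf_shift {A : Set ℕ} (hA : A.Nonempty) (h0 : 0 ∉ A) :
    sInf A = sInf {d | d + 1 ∈ A} + 1 := by
  obtain ⟨a, ha⟩ := hA
  have ha1 : 1 ≤ a := by
    rcases Nat.eq_zero_or_pos a with h | h
    · exact absurd (h ▸ ha) h0
    · exact h
  have hBne : {d | d + 1 ∈ A}.Nonempty := by
    refine ⟨a - 1, ?_⟩
    simp only [Set.mem_setOf_eq, Nat.sub_add_cancel ha1]
    exact ha
  have h1 : sInf {d | d + 1 ∈ A} + 1 ∈ A := Nat.sInf_mem hBne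
  have h2 : sInf A ∈ A := Nat.sInf_mem ⟨a, ha⟩
  have h3 : sInf A ≤ sInf {d | d + 1 ∈ A} + 1 := Nat.sInf_le h1
  have h4 : 1 ≤ sInf A := by
    rcases Nat.eq_zero_or_pos (sInf A) with h | h
    · exact absurd (h ▸ h2) h0
    · exact h
  have h5 : sInf {d | d + 1 ∈ A} ≤ sInf A - 1 := by
    apply Nat.sInf_le
    simp only [Set.mem_setOf_eq, Nat.sub_add_cancel h4]
    exact h2
  omega

lemma phi_stepA (hover : ∃ q, (w q).2 = true) (p : ZMod (2*n))
    (hpw : (w p).2 = false) : phi w (p+1) + 1 = phi w p := by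
  have hA : {d : ℕ | (w (p + (d : ZMod (2*n)))).2 = true}.Nonempty := over_set_nonempty hover p
  have h0 : (0 : ℕ) ∉ {d : ℕ | (w (p + (d : ZMod (2*n)))).2 = true} := by
    simp only [Set.mem_setOf_eq, Nat.cast_zero, add_zero]
    rw [hpw]; simp
  have hshift := nat_sInf_shift hA h0
  have hsetEq : {d : ℕ | d + 1 ∈ {e : ℕ | (w (p + (e : ZMod (2*n)))).2 = true}}
      = {d : ℕ | (w ((p+1) + (d : ZMod (2*n)))).2 = true} := by
    ext d
    simp only [Set.mem_setOf_eq]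
    rw [show p + ((d + 1 : ℕ) : ZMod (2*n)) = (p + 1) + (d : ZMod (2*n)) by push_cast; ring]
  rw [hsetEq] at hshift
  by_cases h1 : (w (p+1)).2 = false
  · rw [phi, if_pos h1, phi, if_pos hpw, hshift]
  · have h1t : (w (p+1)).2 = true := by simpa using h1
    -- phi w p = 1
    have hmem1 : (1 : ℕ) ∈ {d : ℕ | (w (p + (d : ZMod (2*n)))).2 = true} := by
      simp only [Set.mem_setOf_eq, Nat.cast_one]
      exact h1t
    have hinfA : sInf {d : ℕ | (w (p + (d : ZMod (2*n)))).2 = true} = 1 := by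
      have := Nat.sInf_le hmem1
      have h2 : sInf {d : ℕ | (w (p + (d : ZMod (2*n)))).2 = true}
          ∈ {d : ℕ | (w (p + (d : ZMod (2*n)))).2 = true} := Nat.sInf_mem hA
      rcases Nat.eq_zero_or_pos (sInf {d : ℕ | (w (p + (d : ZMod (2*n)))).2 = true}) with h3 | h3
      · exact absurd (h3 ▸ h2) h0
      · omega
    -- phi w (p+1) = 0
    have hmem1' : (1 : ℕ) ∈ {d : ℕ | (w ((p+1) - (d : ZMod (2*n)))).2 = false} := by
      simp only [Set.mem_setOf_eq, Nat.cast_one, add_sub_cancel_right]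
      exact hpw
    have h0' : (0 : ℕ) ∉ {d : ℕ | (w ((p+1) - (d : ZMod (2*n)))).2 = false} := by
      simp only [Set.mem_setOf_eq, Nat.cast_zero, sub_zero]
      rw [h1t]; simp
    have hinfB : sInf {d : ℕ | (w ((p+1) - (d : ZMod (2*n)))).2 = false} = 1 := by
      have := Nat.sInf_le hmem1'
      have h2 : sInf {d : ℕ | (w ((p+1) - (d : ZMod (2*n)))).2 = false}
          ∈ {d : ℕ | (w ((p+1) - (d : ZMod (2*n)))).2 = false} := Nat.sInf_mem ⟨1, hmem1'⟩
      rcases Nat.eq_zero_or_pos (sInf {d : ℕ | (w ((p+1) - (d : ZMod (2*n)))).2 = false}) with h3 | h3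
      · exact absurd (h3 ▸ h2) h0'
      · omega
    rw [phi, if_neg (by rw [h1t]; simp), phi, if_pos hpw, hinfA, hinfB]

lemma phi_stepB (hunder : ∃ q, (w q).2 = false) (p : ZMod (2*n))
    (hpt : (w p).2 = true) (hp1t : (w (p-1)).2 = true) : phi w (p-1) + 1 = phi w p := by
  have hA : {d : ℕ | (w (p - (d : ZMod (2*n)))).2 = false}.Nonempty := under_set_nonempty hunder p
  have h0 : (0 : ℕ) ∉ {d : ℕ | (w (p - (d : ZMod (2*n)))).2 = false} := by
    simp only [Set.mem_setOf_eq, Nat.cast_zero, sub_zero]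
    rw [hpt]; simp
  have hshift := nat_sInf_shift hA h0
  have hsetEq : {d : ℕ | d + 1 ∈ {e : ℕ | (w (p - (e : ZMod (2*n)))).2 = false}}
      = {d : ℕ | (w ((p-1) - (d : ZMod (2*n)))).2 = false} := by
    ext d
    simp only [Set.mem_setOf_eq]
    rw [show p - ((d + 1 : ℕ) : ZMod (2*n)) = (p - 1) - (d : ZMod (2*n)) by push_cast; ring]
  rw [hsetEq] at hshift
  have hBne : {d : ℕ | (w ((p-1) - (d : ZMod (2*n)))).2 = false}.Nonempty :=
    under_set_nonempty hunder (p-1)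
  have h0' : (0 : ℕ) ∉ {d : ℕ | (w ((p-1) - (d : ZMod (2*n)))).2 = false} := by
    simp only [Set.mem_setOf_eq, Nat.cast_zero, sub_zero]
    rw [hp1t]; simp
  have hB1 : 1 ≤ sInf {d : ℕ | (w ((p-1) - (d : ZMod (2*n)))).2 = false} := by
    have h2 := Nat.sInf_mem hBne
    rcases Nat.eq_zero_or_pos (sInf {d : ℕ | (w ((p-1) - (d : ZMod (2*n)))).2 = false}) with h3 | h3
    · exact absurd (h3 ▸ h2) h0'
    · exact h3
  rw [phi, if_neg (by rw [hp1t]; simp), phi, if_neg (by rw [hpt]; simp), hshift]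
  omega

lemma phi_pos (hover : ∃ q, (w q).2 = true) (hunder : ∃ q, (w q).2 = false)
    (p : ZMod (2*n)) (hnb : p ∉ BridgeStarts w) : 1 ≤ phi w p := by
  by_cases hpw : (w p).2 = false
  · rw [phi, if_pos hpw]
    have hA := over_set_nonempty hover p
    have h0 : (0 : ℕ) ∉ {d : ℕ | (w (p + (d : ZMod (2*n)))).2 = true} := by
      simp only [Set.mem_setOf_eq, Nat.cast_zero, add_zero]
      rw [hpw]; simp
    have h2 := Nat.sInf_mem hA
    rcases Nat.eq_zero_or_pos (sInf {d : ℕ | (w (p + (d : ZMod (2*n)))).2 = true}) with h3 | h3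
    · exact absurd (h3 ▸ h2) h0
    · exact h3
  · have hpt : (w p).2 = true := by simpa using hpw
    have hp1t : (w (p-1)).2 = true := by
      by_contra hc
      exact hnb ⟨hpt, by simpa using hc⟩
    rw [phi, if_neg hpw]
    have hA := under_set_nonempty hunder p
    have h2 := Nat.sInf_mem hA
    have h0 : (0 : ℕ) ∉ {d : ℕ | (w (p - (d : ZMod (2*n)))).2 = false} := by
      simp only [Set.mem_setOf_eq, Nat.cast_zero, sub_zero]
      rw [hpt]; simp
    have h1 : (1 : ℕ) ∉ {d : ℕ | (w (p - (d : ZMod (2*n)))).2 = false} := by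
      simp only [Set.mem_setOf_eq, Nat.cast_one]
      rw [hp1t]; simp
    have h3 : sInf {d : ℕ | (w (p - (d : ZMod (2*n)))).2 = false} ≠ 0 := fun hc => h0 (hc ▸ h2)
    have h4 : sInf {d : ℕ | (w (p - (d : ZMod (2*n)))).2 = false} ≠ 1 := fun hc => h1 (hc ▸ h2)
    omega

lemma measure_lt {S : Set (ZMod (2*n))} {p x : ZMod (2*n)} (hp : p ∈ S)
    (hdec : phi w x + 1 = phi w p) :
    ∑ q ∈ (Set.toFinite (insert x (S \ {p}))).toFinset, phi w q
      < ∑ q ∈ (Set.toFinite S).toFinset, phi w q := by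
  classical
  set T := (Set.toFinite S).toFinset with hT
  have hpT : p ∈ T := by rw [hT, Set.Finite.mem_toFinset]; exact hp
  have hsetT : (Set.toFinite (insert x (S \ {p}))).toFinset = insert x (T.erase p) := by
    ext y
    rw [Set.Finite.mem_toFinset, Finset.mem_insert, Finset.mem_erase, hT,
      Set.Finite.mem_toFinset]
    simp only [Set.mem_insert_iff, Set.mem_diff, Set.mem_singleton_iff]
    tauto
  rw [hsetT]
  have h1 : ∑ q ∈ insert x (T.erase p), phi w q ≤ phi w x + ∑ q ∈ T.erase p, phi w q := by
    by_cases hx : x ∈ T.erase p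
    · rw [Finset.insert_eq_self.mpr hx]
      exact Nat.le_add_left _ _
    · rw [Finset.sum_insert hx]
  have h2 : ∑ q ∈ T.erase p, phi w q + phi w p = ∑ q ∈ T, phi w q :=
    Finset.sum_erase_add T _ hpT
  omega

lemma card_le {S : Set (ZMod (2*n))} {p x : ZMod (2*n)} (hp : p ∈ S) :
    Nat.card (insert x (S \ {p}) : Set (ZMod (2*n))) ≤ Nat.card S := by
  rw [Nat.card_coe_set_eq, Nat.card_coe_set_eq]
  calc (insert x (S \ {p})).ncard ≤ (S \ {p}).ncard + 1 := Set.ncard_insert_le _ _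
    _ = S.ncard := Set.ncard_diff_singleton_add_one hp (Set.toFinite S)

end measure


/-- If `(w, S)` is danceable with `k` dancers (over-first), then it is danceable
with at most `k` dancers all of whose initial points are bridge starts. -/
theorem exists_cutSet_of_bridgeStarts
    (n k : ℕ) (hn : 1 ≤ n) (w : ZMod (2*n) → Fin n × Bool) (hw : IsGaussCode w)
    (hover : ∃ p, (w p).2 = true) (hunder : ∃ p, (w p).2 = false)
    (S : Set (ZMod (2*n))) (hS : S.Nonempty) (hcard : Nat.card S = k)
    (hτ : ∃ τ : ZMod (2*n) ≃ Fin (2*n), ValidOverFirst w S τ) :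
    ∃ S' : Set (ZMod (2*n)), S'.Nonempty ∧ Nat.card S' ≤ k ∧
      S' ⊆ BridgeStarts w ∧
      ∃ τ' : ZMod (2*n) ≃ Fin (2*n), ValidOverFirst w S' τ' := by
  haveI : NeZero (2*n) := ⟨by omega⟩
  have key : ∀ N : ℕ, ∀ S : Set (ZMod (2*n)), S.Nonempty →
      (∃ τ : ZMod (2*n) ≃ Fin (2*n), ValidOverFirst w S τ) →
      (∑ q ∈ (Set.toFinite S).toFinset, phi w q) = N →
      ∃ S' : Set (ZMod (2*n)), S'.Nonempty ∧ Nat.card S' ≤ Nat.card S ∧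
        S' ⊆ BridgeStarts w ∧ ∃ τ' : ZMod (2*n) ≃ Fin (2*n), ValidOverFirst w S' τ' := by
    intro N
    induction N using Nat.strong_induction_on with
    | _ N ih =>
      intro T hTne hτex hM
      by_cases hb : T ⊆ BridgeStarts w
      · exact ⟨T, hTne, le_refl _, hb, hτex⟩
      · obtain ⟨p, hpS, hpnb⟩ := Set.not_subset.mp hb
        obtain ⟨τ, hτv⟩ := hτex
        by_cases hpw : (w p).2 = false
        · have hv1 := stepA hpS hpw hτv
          have hdec := phi_stepA hover p hpw
          have hlt : (∑ q ∈ (Set.toFinite (insert (p+1) (T \ {p}))).toFinset, phi w q) < N :=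
            hM ▸ measure_lt hpS hdec
          obtain ⟨S', h1, h2, h3, h4⟩ := ih _ hlt (insert (p+1) (T \ {p}))
            ⟨p+1, Set.mem_insert _ _⟩ ⟨_, hv1⟩ rfl
          exact ⟨S', h1, le_trans h2 (card_le hpS), h3, h4⟩
        · have hpt : (w p).2 = true := by simpa using hpw
          have hp1t : (w (p-1)).2 = true := by
            by_contra hc
            exact hpnb ⟨hpt, by simpa using hc⟩
          have hv1 := stepB (by omega : 1 < 2*n) hpS hp1t hτv
          have hdec := phi_stepB hunder p hpt hp1t
          have hlt : (∑ q ∈ (Set.toFinite (insert (p-1) (T \ {p}))).toFinset, phi w q) < N :=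
            hM ▸ measure_lt hpS hdec
          obtain ⟨S', h1, h2, h3, h4⟩ := ih _ hlt (insert (p-1) (T \ {p}))
            ⟨p-1, Set.mem_insert _ _⟩ ⟨_, hv1⟩ rfl
          exact ⟨S', h1, le_trans h2 (card_le hpS), h3, h4⟩
  obtain ⟨S', h1, h2, h3, h4⟩ := key _ S hS hτ rfl
  exact ⟨S', h1, hcard ▸ h2, h3, h4⟩
end arcs
end
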